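/- arXiv:1705.06596 — 4 statements merged into one kernel-verified Lean document; each statement's English description precedes it below -/
import Mathlib

section
/- Let R be a commutative Noetherian ring and let α be an automorphism of R such that R is α-special, with α-special element a. Let S = R[θ; α]. Then (1 − aθ)S is a maximal right ideal of S. If in addition α has infinite order, then V := S/(1 − aθ)S is a faithful simple right S-module. -/
/-!
STATEMENT 4: Let R be a commutative Noetherian ring and α an automorphism of R such that
R is α-special, with α-special element a. Let S = R[θ; α]. Then (1 − aθ)S is a maximal
right ideal of S. If in addition α has infinite order, then V := S/(1 − aθ)S is a
faithful simple right S-module.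
-/

open MulOpposite

/-- `S`, together with the embedding `i : R →+* S` and the element `θ`, is the skew
polynomial ring `R[θ; α]`. -/
structure IsSkewPolynomialRing {R S : Type*} [Ring R] [Ring S]
    (α : R ≃+* R) (i : R →+* S) (θ : S) : Prop where
  theta_mul : ∀ r : R, θ * i r = i (α r) * θ
  exists_unique_repr : ∀ s : S, ∃! f : ℕ →₀ R, s = f.sum fun n r => i r * θ ^ n

/-- `a` is an `α`-special element of the commutative ring `R`:
all the norms `N_n^α(a) = a·α(a)⋯α^{n-1}(a)` are non-zero, and every non-zero α-stable
ideal of `R` contains some `N_n^α(a)` with `n ≥ 1`. -/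
def IsAlphaSpecialElement {R : Type*} [CommRing R] (α : R ≃+* R) (a : R) : Prop :=
  (∀ n : ℕ, 0 < n → (∏ k ∈ Finset.range n, (⇑α)^[k] a) ≠ 0) ∧
  (∀ I : Ideal R, (∀ r : R, r ∈ I ↔ α r ∈ I) → I ≠ ⊥ →
    ∃ n : ℕ, 0 < n ∧ (∏ k ∈ Finset.range n, (⇑α)^[k] a) ∈ I)

/-!
Write `N_m` for `N_m^α(a)`. As `(aθ)^m = N_m θ^m`, modulo `(1 - aθ)S` each `r θ^k` is congruent to
`N_m α^m(r) θ^(m+k)`: every element is congruent to some `c θ^D`, and a monomial `c θ^k` in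
`(1 - aθ)S` forces `N_m α^m(c) = 0`.

In a Noetherian ring an ideal `I` with `α(I) ⊆ I` is `α`-stable. Applied to
`{x | N_m α^m(x) ∈ J for large m}`, this puts some `N_n` into every non-zero ideal `J` with
`a α(J) ⊆ J`. So `N_m α^m(x) = 0` forces `x = 0` (take `J = 0`), and a right ideal strictly above
`(1 - aθ)S` contains a non-zero `c θ^D`, hence some `N_E θ^E ≡ 1`.

For faithfulness take `t ≠ 0` of least degree `d` with `S t ⊆ (1 - aθ)S`. Then `t r = α^d(r) t`,
so each lower coefficient of `t` annihilates the non-zero `α`-stable ideal generated by the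
`r - α^(d-k)(r)`; since a special element makes `R` `α`-prime, these coefficients vanish and `t`
is a monomial in `(1 - aθ)S`.
-/

open Filter Function

theorem Monotone.apply_eq_of_le_apply {β : Type*} [PartialOrder β] [WellFoundedGT β]
    {f : β → β} (hf : Monotone f) (hinj : Injective f) {x : β} (hx : x ≤ f x) : f x = x := by
  obtain ⟨n, hn⟩ := WellFoundedGT.monotone_chain_condition ⟨fun n => f^[n] x,
    hf.monotone_iterate_of_le_map hx⟩
  apply hinj.iterate n
  rw [← iterate_succ_apply]
  exact (hn (n + 1) n.le_succ).symm

theorem Ideal.mem_iff_apply_mem_of_le_comap {R : Type*} [Semiring R] [IsNoetherianRing R]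
    (σ : R ≃+* R) {I : Ideal R} (h : I ≤ I.comap σ) (r : R) : r ∈ I ↔ σ r ∈ I := by
  rw [← Ideal.mem_comap, Monotone.apply_eq_of_le_apply (fun _ _ => Ideal.comap_mono)
    (Ideal.comap_injective_of_surjective _ σ.surjective) h]

section SkewNorm

variable {R : Type*} [CommRing R] (α : R ≃+* R) (a : R)

def skewNorm (n : ℕ) : R := ∏ k ∈ Finset.range n, (⇑α)^[k] a

@[simp]
theorem skewNorm_zero : skewNorm α a 0 = 1 := Finset.prod_range_zero _

theorem skewNorm_succ (n : ℕ) : skewNorm α a (n + 1) = skewNorm α a n * (⇑α)^[n] a :=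
  Finset.prod_range_succ _ n

@[simp]
theorem skewNorm_one : skewNorm α a 1 = a := by simp [skewNorm_succ]

theorem skewNorm_add (m n : ℕ) :
    skewNorm α a (m + n) = skewNorm α a m * (⇑α)^[m] (skewNorm α a n) := by
  induction n with
  | zero => simp
  | succ n ih =>
    rw [← add_assoc, skewNorm_succ, ih, skewNorm_succ, iterate_map_mul, iterate_add_apply,
      mul_assoc]

theorem skewNorm_succ' (n : ℕ) : skewNorm α a (n + 1) = a * α (skewNorm α a n) := by
  rw [add_comm, skewNorm_add, skewNorm_one, iterate_one]

theorem skewNorm_succ_mul_iterate_succ (n : ℕ) (x : R) :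
    skewNorm α a (n + 1) * (⇑α)^[n + 1] x = a * α (skewNorm α a n * (⇑α)^[n] x) := by
  rw [skewNorm_succ', map_mul, iterate_succ_apply', mul_assoc]

def skewSaturation (J : Ideal R) : Ideal R where
  carrier := {x | ∀ᶠ m in atTop, skewNorm α a m * (⇑α)^[m] x ∈ J}
  add_mem' hx hy := (hx.and hy).mono fun m h => by
    rw [iterate_map_add, mul_add]
    exact J.add_mem h.1 h.2
  zero_mem' := by simp
  smul_mem' r x hx := hx.mono fun m h => by
    rw [smul_eq_mul, iterate_map_mul, mul_left_comm]
    exact J.mul_mem_left _ h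

variable {α a}

theorem mem_skewSaturation_of_mem {J : Ideal R} (hJ : ∀ x ∈ J, a * α x ∈ J) {m : ℕ} {x : R}
    (hx : skewNorm α a m * (⇑α)^[m] x ∈ J) : x ∈ skewSaturation α a J :=
  eventually_atTop.2 ⟨m, fun n hn => by
    induction n, hn using Nat.le_induction with
    | base => exact hx
    | succ n _ ih => rw [skewNorm_succ_mul_iterate_succ]; exact hJ _ ih⟩

theorem symm_apply_mem_skewSaturation {J : Ideal R} {x : R} (hx : x ∈ skewSaturation α a J) :
    α.symm x ∈ skewSaturation α a J := by
  have h : ∀ᶠ m in atTop, skewNorm α a (m + 1) * (⇑α)^[m + 1] (α.symm x) ∈ J :=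
    hx.mono fun m h => by
      rw [skewNorm_succ, iterate_succ_apply, α.apply_symm_apply, mul_right_comm]
      exact J.mul_mem_right _ h
  show ∀ᶠ m in atTop, _
  rw [← map_add_atTop_eq_nat 1]
  exact h

end SkewNorm

namespace IsAlphaSpecialElement

variable {R : Type*} [CommRing R] {α : R ≃+* R} {a : R}

theorem eq_bot_or_eq_bot_of_mul_eq_bot (ha : IsAlphaSpecialElement α a) {I J : Ideal R}
    (hI : ∀ r, r ∈ I ↔ α r ∈ I) (hJ : ∀ r, r ∈ J ↔ α r ∈ J) (hIJ : I * J = ⊥) :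
    I = ⊥ ∨ J = ⊥ := by
  by_contra! h
  obtain ⟨m, hm, hmI⟩ := ha.2 I hI h.1
  obtain ⟨n, -, hnJ⟩ := ha.2 J hJ h.2
  have hJm : (⇑α)^[m] (skewNorm α a n) ∈ J :=
    Set.MapsTo.iterate (fun r hr => (hJ r).1 hr) m hnJ
  have hmem : skewNorm α a (m + n) ∈ I * J := by
    rw [skewNorm_add]
    exact Ideal.mul_mem_mul hmI hJm
  rw [hIJ, Ideal.mem_bot] at hmem
  exact ha.1 (m + n) (by omega) hmem

variable [IsNoetherianRing R]

theorem exists_skewNorm_mem_of_mul_mem (ha : IsAlphaSpecialElement α a) {J : Ideal R}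
    (hJ : ∀ x ∈ J, a * α x ∈ J) {m : ℕ} {x : R} (hx : x ≠ 0)
    (hxJ : skewNorm α a m * (⇑α)^[m] x ∈ J) : ∃ n, 0 < n ∧ skewNorm α a n ∈ J := by
  have hstab := Ideal.mem_iff_apply_mem_of_le_comap α.symm (I := skewSaturation α a J)
    fun _ => symm_apply_mem_skewSaturation
  have hne : skewSaturation α a J ≠ ⊥ := fun h => hx <| by
    simpa [h] using mem_skewSaturation_of_mem hJ hxJ
  obtain ⟨n, hn, hnQ⟩ := ha.2 _ (fun r => by rw [hstab (α r), α.symm_apply_apply]) hne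
  obtain ⟨k, hk⟩ := (eventually_atTop.1 hnQ)
  exact ⟨k + n, by omega, by rw [skewNorm_add]; exact hk k le_rfl⟩

theorem eq_zero_of_skewNorm_mul_iterate_eq_zero (ha : IsAlphaSpecialElement α a) {m : ℕ}
    {x : R} (h : skewNorm α a m * (⇑α)^[m] x = 0) : x = 0 := by
  by_contra hx
  obtain ⟨n, hn, hnJ⟩ := ha.exists_skewNorm_mem_of_mul_mem (J := ⊥) (by simp) hx (by simpa)
  exact ha.1 n hn (Ideal.mem_bot.1 hnJ)

theorem eq_zero_of_forall_mul_iterate_eq (ha : IsAlphaSpecialElement α a) {n : ℕ}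
    (hn : (⇑α)^[n] ≠ id) {x : R} (hx : ∀ r, x * (⇑α)^[n] r = x * r) : x = 0 := by
  set W := Ideal.span (Set.range fun r => (⇑α)^[n] r - r)
  have hW := Ideal.mem_iff_apply_mem_of_le_comap α (I := W) <| Ideal.span_le.2 <| by
    rintro _ ⟨r, rfl⟩
    refine Ideal.subset_span ⟨α r, ?_⟩
    rw [map_sub, ← iterate_succ_apply' (⇑α), iterate_succ_apply]
  have hA := Ideal.mem_iff_apply_mem_of_le_comap α (I := W.annihilator) fun y hy => by
    refine Submodule.mem_annihilator.2 fun w hw => ?_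
    have hw' : α.symm w ∈ W := (hW _).2 (by rwa [α.apply_symm_apply])
    rw [smul_eq_mul, ← α.apply_symm_apply w, ← map_mul, ← smul_eq_mul,
      Submodule.mem_annihilator.1 hy _ hw', map_zero]
  rcases ha.eq_bot_or_eq_bot_of_mul_eq_bot hA hW (Submodule.annihilator_mul W) with h | h
  · have hxA : x ∈ W.annihilator := (Submodule.mem_annihilator_span _ _).2 <| by
      rintro ⟨_, r, rfl⟩
      rw [smul_eq_mul, mul_sub, hx, sub_self]
    simpa [h] using hxA
  · refine absurd (funext fun r => ?_) hn
    have hr : (⇑α)^[n] r - r ∈ W := Ideal.subset_span ⟨r, rfl⟩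
    rwa [h, Ideal.mem_bot, sub_eq_zero] at hr

end IsAlphaSpecialElement

section RightIdeal

variable {S : Type*} [Ring S]

theorem sub_pow_mul_mem_span_one_sub (y s : S) (n : ℕ) :
    s - y ^ n * s ∈ Submodule.span Sᵐᵒᵖ {1 - y} :=
  Submodule.mem_span_singleton.2 ⟨op ((∑ k ∈ Finset.range n, y ^ k) * s), by
    rw [op_smul_eq_mul, ← mul_assoc, mul_neg_geom_sum, sub_mul, one_mul]⟩

theorem mul_pow_mem_of_le {M : Submodule Sᵐᵒᵖ S} {x y : S} {e f : ℕ} (hef : e ≤ f)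
    (h : x * y ^ e ∈ M) : x * y ^ f ∈ M := by
  obtain ⟨d, rfl⟩ := Nat.exists_eq_add_of_le hef
  rw [pow_add, ← mul_assoc]
  exact M.smul_mem (op (y ^ d)) h

end RightIdeal

namespace IsSkewPolynomialRing

section Ring

variable {R S : Type*} [Ring R] [Ring S] {α : R ≃+* R} {i : R →+* S} {θ : S}

theorem theta_pow_mul (hS : IsSkewPolynomialRing α i θ) (n : ℕ) (r : R) :
    θ ^ n * i r = i ((⇑α)^[n] r) * θ ^ n := by
  induction n generalizing r with
  | zero => simp
  | succ n ih =>
    rw [pow_succ, mul_assoc, hS.theta_mul, ← mul_assoc, ih, mul_assoc, ← pow_succ,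
      iterate_succ_apply]

theorem monomial_mul_monomial (hS : IsSkewPolynomialRing α i θ) (r x : R) (m k : ℕ) :
    i r * θ ^ m * (i x * θ ^ k) = i (r * (⇑α)^[m] x) * θ ^ (m + k) := by
  rw [mul_assoc, ← mul_assoc (θ ^ m), hS.theta_pow_mul, map_mul, pow_add]
  simp only [mul_assoc]

theorem monomial_mul_C_iterate_symm (hS : IsSkewPolynomialRing α i θ) (r x : R) (e : ℕ) :
    i r * θ ^ e * i ((⇑α.symm)^[e] x) = i (r * x) * θ ^ e := by
  rw [mul_assoc, hS.theta_pow_mul, LeftInverse.iterate α.apply_symm_apply e x, ← mul_assoc,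
    ← map_mul]

noncomputable def repr (hS : IsSkewPolynomialRing α i θ) : S ≃+ (ℕ →₀ R) :=
  let F : (ℕ →₀ R) →+ S :=
    Finsupp.liftAddHom fun n => (AddMonoidHom.mulRight (θ ^ n)).comp i.toAddMonoidHom
  have hF (f : ℕ →₀ R) : F f = f.sum fun n r => i r * θ ^ n := by
    simp [F, Finsupp.liftAddHom_apply, comp_def]
  (AddEquiv.ofBijective F
    ⟨fun f g hfg => (hS.exists_unique_repr _).unique (hF f) (hfg.trans (hF g)),
      fun s => let ⟨f, hf, _⟩ := hS.exists_unique_repr s; ⟨f, (hF f).trans hf.symm⟩⟩).symm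

theorem repr_symm_apply (hS : IsSkewPolynomialRing α i θ) (f : ℕ →₀ R) :
    hS.repr.symm f = f.sum fun n r => i r * θ ^ n := by
  simp [repr, Finsupp.liftAddHom_apply, comp_def]

theorem repr_symm_single (hS : IsSkewPolynomialRing α i θ) (n : ℕ) (r : R) :
    hS.repr.symm (Finsupp.single n r) = i r * θ ^ n := by
  rw [repr_symm_apply, Finsupp.sum_single_index (by simp)]

theorem repr_monomial (hS : IsSkewPolynomialRing α i θ) (r : R) (n : ℕ) :
    hS.repr (i r * θ ^ n) = Finsupp.single n r := by
  rw [← hS.repr_symm_single, AddEquiv.apply_symm_apply]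

theorem sum_repr (hS : IsSkewPolynomialRing α i θ) (s : S) :
    ∑ k ∈ (hS.repr s).support, i (hS.repr s k) * θ ^ k = s := by
  have h := hS.repr_symm_apply (hS.repr s)
  rw [AddEquiv.symm_apply_apply] at h
  exact h.symm

theorem induction_on_support_le (hS : IsSkewPolynomialRing α i θ) {p : S → Prop} {D : ℕ}
    (zero : p 0) (add : ∀ x y, p x → p y → p (x + y))
    (monomial : ∀ (r : R) (k : ℕ), k ≤ D → p (i r * θ ^ k)) {s : S}
    (hs : ∀ k ∈ (hS.repr s).support, k ≤ D) : p s := by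
  rw [← hS.sum_repr s]
  exact Finset.sum_induction _ p add zero fun k hk => monomial _ k (hs k hk)

theorem repr_mul_C_apply (hS : IsSkewPolynomialRing α i θ) (s : S) (r : R) (k : ℕ) :
    hS.repr (s * i r) k = hS.repr s k * (⇑α)^[k] r := by
  obtain ⟨f, rfl⟩ := hS.repr.symm.surjective s
  induction f using Finsupp.induction_linear with
  | zero => simp
  | add f g hf hg => simp only [map_add, add_mul, Finsupp.add_apply, hf, hg]
  | single n x =>
    rw [repr_symm_single, mul_assoc, hS.theta_pow_mul, ← mul_assoc, ← map_mul, repr_monomial,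
      repr_monomial, Finsupp.single_apply, Finsupp.single_apply]
    split_ifs with h
    · rw [h]
    · rw [zero_mul]

theorem repr_C_mul_apply (hS : IsSkewPolynomialRing α i θ) (r : R) (s : S) (k : ℕ) :
    hS.repr (i r * s) k = r * hS.repr s k := by
  obtain ⟨f, rfl⟩ := hS.repr.symm.surjective s
  induction f using Finsupp.induction_linear with
  | zero => simp
  | add f g hf hg => simp only [map_add, mul_add, Finsupp.add_apply, hf, hg]
  | single n x =>
    rw [repr_symm_single, ← mul_assoc, ← map_mul, repr_monomial, repr_monomial,
      Finsupp.single_apply, Finsupp.single_apply]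
    split_ifs <;> simp

end Ring

section CommRing

variable {R S : Type*} [CommRing R] [Ring S] {α : R ≃+* R} {i : R →+* S} {θ : S} {a : R}

theorem C_mul_theta_pow (hS : IsSkewPolynomialRing α i θ) (n : ℕ) :
    (i a * θ) ^ n = i (skewNorm α a n) * θ ^ n := by
  induction n with
  | zero => simp
  | succ n ih =>
    calc (i a * θ) ^ (n + 1) = i a * θ ^ 1 * (i (skewNorm α a n) * θ ^ n) := by
          rw [pow_succ', ih, pow_one]
      _ = i (skewNorm α a (n + 1)) * θ ^ (n + 1) := by
          rw [hS.monomial_mul_monomial, iterate_one, ← skewNorm_succ', add_comm]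

theorem monomial_sub_mem_span (hS : IsSkewPolynomialRing α i θ) (r : R) (k m : ℕ) :
    i r * θ ^ k - i (skewNorm α a m * (⇑α)^[m] r) * θ ^ (m + k) ∈
      Submodule.span Sᵐᵒᵖ {1 - i a * θ} := by
  simpa only [hS.C_mul_theta_pow, hS.monomial_mul_monomial] using
    sub_pow_mul_mem_span_one_sub (i a * θ) (i r * θ ^ k) m

/-- `∑ rₖ θᵏ ↦ ∑ N_{D-k}(a) α^{D-k}(rₖ)`: modulo `(1 - aθ)S`, an element of degree at most `D`
is congruent to this coefficient times `θ^D` (in higher degrees the truncated `D - k` makes it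
meaningless). -/
noncomputable def reduceToDegree (hS : IsSkewPolynomialRing α i θ) (a : R) (D : ℕ) : S →+ R :=
  (Finsupp.liftAddHom fun k => AddMonoidHom.mk' (fun r => skewNorm α a (D - k) * (⇑α)^[D - k] r)
    fun r s => by rw [iterate_map_add, mul_add]).comp hS.repr.toAddMonoidHom

theorem reduceToDegree_monomial (hS : IsSkewPolynomialRing α i θ) (D : ℕ) (r : R) (k : ℕ) :
    hS.reduceToDegree a D (i r * θ ^ k) = skewNorm α a (D - k) * (⇑α)^[D - k] r := by
  simp [reduceToDegree, repr_monomial]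

theorem sub_reduceToDegree_mem_span (hS : IsSkewPolynomialRing α i θ) {D : ℕ} {s : S}
    (hs : ∀ k ∈ (hS.repr s).support, k ≤ D) :
    s - i (hS.reduceToDegree a D s) * θ ^ D ∈ Submodule.span Sᵐᵒᵖ {1 - i a * θ} := by
  refine hS.induction_on_support_le
    (p := fun s => s - i (hS.reduceToDegree a D s) * θ ^ D ∈ Submodule.span Sᵐᵒᵖ {1 - i a * θ})
    (by simp) (fun x y hx hy => ?_) (fun r k hk => ?_) hs
  · rw [map_add, map_add, add_mul, add_sub_add_comm]
    exact add_mem hx hy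
  · have h := hS.monomial_sub_mem_span (a := a) r k (D - k)
    rwa [Nat.sub_add_cancel hk, ← hS.reduceToDegree_monomial] at h

theorem reduceToDegree_C_mul_theta_mul (hS : IsSkewPolynomialRing α i θ) {D : ℕ} {u : S}
    (hu : ∀ k ∈ (hS.repr u).support, k ≤ D) :
    hS.reduceToDegree a (D + 1) (i a * θ * u) = hS.reduceToDegree a (D + 1) u := by
  refine hS.induction_on_support_le
    (p := fun u => hS.reduceToDegree a (D + 1) (i a * θ * u) = hS.reduceToDegree a (D + 1) u)
    (by simp) (fun x y hx hy => ?_) (fun r k hk => ?_) hu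
  · rw [mul_add, map_add, map_add, hx, hy]
  · obtain ⟨j, rfl⟩ := Nat.exists_eq_add_of_le hk
    have h : i a * θ * (i r * θ ^ k) = i (a * α r) * θ ^ (1 + k) := by
      simpa using hS.monomial_mul_monomial a r 1 k
    rw [h, reduceToDegree_monomial, reduceToDegree_monomial,
      show k + j + 1 - (1 + k) = j by omega, show k + j + 1 - k = j + 1 by omega,
      skewNorm_succ, iterate_map_mul, iterate_succ_apply, mul_assoc]

theorem exists_skewNorm_mul_eq_zero_of_monomial_mem (hS : IsSkewPolynomialRing α i θ) {c : R}
    {k : ℕ} (h : i c * θ ^ k ∈ Submodule.span Sᵐᵒᵖ {1 - i a * θ}) :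
    ∃ m, skewNorm α a m * (⇑α)^[m] c = 0 := by
  obtain ⟨u, hu⟩ := Submodule.mem_span_singleton.1 h
  obtain ⟨D, hD⟩ := Finset.exists_le (insert k (hS.repr u.unop).support)
  refine ⟨D + 1 - k, ?_⟩
  have hu' : (1 - i a * θ) * u.unop = i c * θ ^ k := hu
  rw [← hS.reduceToDegree_monomial, ← hu', sub_mul, one_mul, map_sub,
    hS.reduceToDegree_C_mul_theta_mul fun j hj => hD j (Finset.mem_insert_of_mem hj), sub_self]

def coeffIdeal (hS : IsSkewPolynomialRing α i θ) (M : Submodule Sᵐᵒᵖ S) : Ideal R where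
  carrier := {r | ∃ e, i r * θ ^ e ∈ M}
  add_mem' := by
    rintro x y ⟨e, hx⟩ ⟨f, hy⟩
    refine ⟨e + f, ?_⟩
    rw [map_add, add_mul]
    exact M.add_mem (mul_pow_mem_of_le (by omega) hx) (mul_pow_mem_of_le (by omega) hy)
  zero_mem' := ⟨0, by simp⟩
  smul_mem' := by
    rintro x r ⟨e, hr⟩
    refine ⟨e, ?_⟩
    rw [smul_eq_mul, mul_comm, ← hS.monomial_mul_C_iterate_symm]
    exact M.smul_mem (op _) hr

theorem mul_apply_mem_coeffIdeal (hS : IsSkewPolynomialRing α i θ) {M : Submodule Sᵐᵒᵖ S}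
    (hM : Submodule.span Sᵐᵒᵖ {1 - i a * θ} ≤ M) {r : R} (hr : r ∈ hS.coeffIdeal M) :
    a * α r ∈ hS.coeffIdeal M := by
  obtain ⟨e, he⟩ := hr
  refine ⟨1 + e, ?_⟩
  have h := M.sub_mem he (hM (hS.monomial_sub_mem_span r e 1))
  rwa [sub_sub_cancel, skewNorm_one, iterate_one] at h

variable [IsNoetherianRing R]

theorem eq_zero_of_monomial_mem (hS : IsSkewPolynomialRing α i θ)
    (ha : IsAlphaSpecialElement α a) {c : R} {k : ℕ}
    (h : i c * θ ^ k ∈ Submodule.span Sᵐᵒᵖ {1 - i a * θ}) : c = 0 :=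
  let ⟨_, hm⟩ := hS.exists_skewNorm_mul_eq_zero_of_monomial_mem h
  ha.eq_zero_of_skewNorm_mul_iterate_eq_zero hm

theorem one_notMem_span (hS : IsSkewPolynomialRing α i θ) (ha : IsAlphaSpecialElement α a) :
    (1 : S) ∉ Submodule.span Sᵐᵒᵖ {1 - i a * θ} := fun h => by
  have h1 : (1 : R) = 0 := hS.eq_zero_of_monomial_mem ha (k := 0) (by simpa using h)
  exact ha.1 1 one_pos (by simpa using congrArg (a * ·) h1)

theorem one_mem_of_monomial_mem (hS : IsSkewPolynomialRing α i θ)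
    (ha : IsAlphaSpecialElement α a) {M : Submodule Sᵐᵒᵖ S}
    (hM : Submodule.span Sᵐᵒᵖ {1 - i a * θ} ≤ M) {c : R} (hc : c ≠ 0) {D : ℕ}
    (h : i c * θ ^ D ∈ M) : (1 : S) ∈ M := by
  obtain ⟨n, -, e, he⟩ := ha.exists_skewNorm_mem_of_mul_mem
    (fun _ => hS.mul_apply_mem_coeffIdeal hM) hc (m := 0) ⟨D, by simpa using h⟩
  have hNE : i (skewNorm α a (n + e)) * θ ^ (n + e) ∈ M := by
    rw [skewNorm_add, ← hS.monomial_mul_C_iterate_symm]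
    exact M.smul_mem (op _) (mul_pow_mem_of_le (by omega) he)
  simpa using M.add_mem (hM (hS.monomial_sub_mem_span (a := a) 1 0 (n + e))) hNE

theorem isCoatom_span_one_sub (hS : IsSkewPolynomialRing α i θ)
    (ha : IsAlphaSpecialElement α a) : IsCoatom (Submodule.span Sᵐᵒᵖ {1 - i a * θ}) := by
  refine ⟨fun h => hS.one_notMem_span ha (h ▸ Submodule.mem_top), fun M hM => ?_⟩
  obtain ⟨s, hsM, hs⟩ := SetLike.exists_of_lt hM
  obtain ⟨D, hD⟩ := Finset.exists_le (hS.repr s).support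
  have hred := hS.sub_reduceToDegree_mem_span (a := a) hD
  have hc : hS.reduceToDegree a D s ≠ 0 := fun h0 => hs (by simpa [h0] using hred)
  have h1 := hS.one_mem_of_monomial_mem ha hM.le hc (by simpa using M.sub_mem hsM (hM.le hred))
  exact eq_top_iff.2 fun x _ => by simpa using M.smul_mem (op x) h1

theorem eq_zero_of_mem_of_mul_C_eq (hS : IsSkewPolynomialRing α i θ)
    (ha : IsAlphaSpecialElement α a) (hα : ∀ n : ℕ, 0 < n → (⇑α)^[n] ≠ id) {t : S} {d : ℕ}
    (hd : ∀ k ∈ (hS.repr t).support, k ≤ d) (hcomm : ∀ r, t * i r = i ((⇑α)^[d] r) * t)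
    (ht : t ∈ Submodule.span Sᵐᵒᵖ {1 - i a * θ}) : t = 0 := by
  have hcoeff (k : ℕ) (r : R) : hS.repr t k * (⇑α)^[k] r = hS.repr t k * (⇑α)^[d] r := by
    simpa [repr_mul_C_apply, repr_C_mul_apply, mul_comm] using congrArg (hS.repr · k) (hcomm r)
  have hlow (k : ℕ) (hk : k < d) : hS.repr t k = 0 := by
    refine ha.eq_zero_of_forall_mul_iterate_eq (hα (d - k) (by omega)) fun r => ?_
    have hr := hcoeff k ((⇑α.symm)^[k] r)
    rwa [← Nat.sub_add_cancel hk.le, iterate_add_apply, LeftInverse.iterate α.apply_symm_apply,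
      eq_comm] at hr
  have hmono : t = i (hS.repr t d) * θ ^ d := by
    rw [← hS.repr_symm_single, AddEquiv.eq_symm_apply]
    ext k
    rcases lt_trichotomy k d with h | rfl | h
    · simp [hlow k h, h.ne]
    · simp
    · have hk : k ∉ (hS.repr t).support := fun hk => (hd k hk).not_gt h
      simp [Finsupp.notMem_support_iff.1 hk, h.ne']
  have h0 : hS.repr t d = 0 := hS.eq_zero_of_monomial_mem ha (by rwa [← hmono])
  rw [hmono, h0, map_zero, zero_mul]

/-- For `t` of degree `d`, the element `t r - α^d(r) t` has degree `< d` and again satisfies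
`ht`. -/
theorem eq_zero_of_forall_mul_mem_of_support_lt (hS : IsSkewPolynomialRing α i θ)
    (ha : IsAlphaSpecialElement α a) (hα : ∀ n : ℕ, 0 < n → (⇑α)^[n] ≠ id) (d : ℕ) {t : S}
    (hd : ∀ k ∈ (hS.repr t).support, k < d)
    (ht : ∀ x, x * t ∈ Submodule.span Sᵐᵒᵖ {1 - i a * θ}) : t = 0 := by
  induction d generalizing t with
  | zero => exact hS.repr.injective (Finsupp.ext fun k => by simpa using hd k)
  | succ d ih =>
    refine hS.eq_zero_of_mem_of_mul_C_eq ha hα (fun k hk => Nat.le_of_lt_succ (hd k hk))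
      (fun r => sub_eq_zero.1 (ih (fun k hk => ?_) fun x => ?_)) (by simpa using ht 1)
    · by_contra! hdk
      apply Finsupp.mem_support_iff.1 hk
      rw [map_sub, Finsupp.sub_apply, repr_mul_C_apply, repr_C_mul_apply]
      rcases hdk.eq_or_lt with rfl | hlt
      · rw [mul_comm, sub_self]
      · have hk' : k ∉ (hS.repr t).support := fun h => (hd k h).not_ge hlt
        simp [Finsupp.notMem_support_iff.1 hk']
    · rw [mul_sub, ← mul_assoc, ← mul_assoc]
      exact sub_mem ((Submodule.span _ _).smul_mem (op (i r)) (ht x)) (ht _)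

theorem eq_zero_of_forall_mul_mem (hS : IsSkewPolynomialRing α i θ)
    (ha : IsAlphaSpecialElement α a) (hα : ∀ n : ℕ, 0 < n → (⇑α)^[n] ≠ id) {t : S}
    (ht : ∀ x, x * t ∈ Submodule.span Sᵐᵒᵖ {1 - i a * θ}) : t = 0 :=
  let ⟨D, hD⟩ := Finset.exists_le (hS.repr t).support
  hS.eq_zero_of_forall_mul_mem_of_support_lt ha hα (D + 1)
    (fun k hk => Nat.lt_succ_of_le (hD k hk)) ht

end CommRing

end IsSkewPolynomialRing

theorem maximal_and_faithful_of_special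
    {R S : Type*} [CommRing R] [IsNoetherianRing R] [Ring S]
    (α : R ≃+* R) (i : R →+* S) (θ : S) (hS : IsSkewPolynomialRing α i θ)
    (a : R) (ha : IsAlphaSpecialElement α a) :
    -- (1 − aθ)S is a maximal right ideal of S
    IsCoatom (Submodule.span Sᵐᵒᵖ {(1 : S) - i a * θ}) ∧
    -- if α has infinite order then S/(1 − aθ)S is a faithful (simple) right S-module
    ((∀ n : ℕ, 0 < n → (⇑α)^[n] ≠ id) →
      IsSimpleModule Sᵐᵒᵖ (S ⧸ Submodule.span Sᵐᵒᵖ {(1 : S) - i a * θ}) ∧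
      Module.annihilator Sᵐᵒᵖ (S ⧸ Submodule.span Sᵐᵒᵖ {(1 : S) - i a * θ}) = ⊥) := by
  have hmax := hS.isCoatom_span_one_sub ha
  refine ⟨hmax, fun hα => ⟨isSimpleModule_iff_isCoatom.2 hmax, eq_bot_iff.2 fun x hx => ?_⟩⟩
  rw [Submodule.annihilator_quotient, Submodule.mem_colon] at hx
  exact (Submodule.mem_bot _).2 <| unop_injective <|
    hS.eq_zero_of_forall_mul_mem ha hα fun y => hx y trivial
end

section
/- Let α be an automorphism of a commutative ring R, let S = R[θ; α], and let ρ be a non-zero non-unit of R. Then S/ρS is not an Artinian right S-module. In fact, the chain θS + ρS ⊇ θ^2 S + ρS ⊇ ⋯ ⊇ θ^m S + ρS ⊇ ⋯ of right ideals of S is strictly descending. -/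
/-!
Every element of `S` has a unique expansion `∑ i(rₙ) θⁿ`, and `θ S` only involves powers `θⁿ`
with `n ≥ 1`. So if `θ^m = θ^(m+1) a + ρ b`, comparing the coefficients of `θ^m` gives
`1 = ρ · (coefficient of b)`, making `ρ` a unit. Hence the chain `θ^m S + ρS` descends strictly,
and its image in `S/ρS` contradicts the descending chain condition.
-/

open MulOpposite

theorem Submodule.not_isArtinian_quotient_of_strictAnti {A M : Type*} [Ring A] [AddCommGroup M]
    [Module A M] {p : Submodule A M} {N : ℕ → Submodule A M} (hN : StrictAnti N)
    (hp : ∀ n, p ≤ N n) : ¬ IsArtinian A (M ⧸ p) := fun _ =>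
  not_strictAnti_of_wellFoundedLT (fun n => (comapMkQRelIso p).symm ⟨N n, hp n⟩)
    fun _ _ h => (comapMkQRelIso p).symm.strictMono (hN h)

namespace IsSkewPolynomialRing

section Ring

variable {R S : Type*} [Ring R] [Ring S] {α : R ≃+* R} {i : R →+* S} {θ : S}

theorem pow_mul_apply (hS : IsSkewPolynomialRing α i θ) (k : ℕ) (r : R) :
    θ ^ k * i r = i ((α ^ k) r) * θ ^ k := by
  induction k generalizing r with
  | zero => simp
  | succ k ih =>
    rw [pow_succ, mul_assoc, hS.theta_mul, ← mul_assoc, ih, mul_assoc, ← pow_succ]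
    rfl

variable (i θ) in
noncomputable def ofCoeff : (ℕ →₀ R) →+ S :=
  Finsupp.liftAddHom fun n => (AddMonoidHom.mulRight (θ ^ n)).comp i.toAddMonoidHom

theorem ofCoeff_apply (f : ℕ →₀ R) : ofCoeff i θ f = f.sum fun n r => i r * θ ^ n := rfl

theorem bijective_ofCoeff (hS : IsSkewPolynomialRing α i θ) : Function.Bijective (ofCoeff i θ) :=
  (Function.bijective_iff_existsUnique _).2 fun s => by
    simpa only [ofCoeff_apply, eq_comm] using hS.exists_unique_repr s

noncomputable def coeff (hS : IsSkewPolynomialRing α i θ) : S ≃+ (ℕ →₀ R) :=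
  (AddEquiv.ofBijective (ofCoeff i θ) hS.bijective_ofCoeff).symm

variable (hS : IsSkewPolynomialRing α i θ)

theorem coeff_eq_iff {s : S} {f : ℕ →₀ R} : hS.coeff s = f ↔ s = ofCoeff i θ f :=
  AddEquiv.symm_apply_eq _

theorem ofCoeff_coeff (s : S) : ofCoeff i θ (hS.coeff s) = s :=
  (AddEquiv.ofBijective (ofCoeff i θ) hS.bijective_ofCoeff).apply_symm_apply s

theorem coeff_pow (m : ℕ) : hS.coeff (θ ^ m) = Finsupp.single m 1 := by
  simp [coeff_eq_iff, ofCoeff_apply]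

theorem coeff_of_mul (r : R) (t : S) :
    hS.coeff (i r * t) = Finsupp.mapRange (r * ·) (mul_zero r) (hS.coeff t) := by
  rw [coeff_eq_iff, ofCoeff_apply, Finsupp.sum_mapRange_index (by simp)]
  conv_lhs => rw [← hS.ofCoeff_coeff t, ofCoeff_apply, Finsupp.mul_sum]
  simp only [map_mul, mul_assoc]

theorem coeff_pow_mul (m : ℕ) (s : S) :
    hS.coeff (θ ^ m * s) =
      (Finsupp.mapRange (α ^ m : R ≃+* R) (map_zero _) (hS.coeff s)).mapDomain (· + m) := by
  rw [coeff_eq_iff, ofCoeff_apply, Finsupp.sum_mapDomain_index_inj (add_left_injective m),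
    Finsupp.sum_mapRange_index (by simp)]
  conv_lhs => rw [← hS.ofCoeff_coeff s, ofCoeff_apply, Finsupp.mul_sum]
  refine Finsupp.sum_congr fun k _ => ?_
  rw [← mul_assoc, hS.pow_mul_apply, mul_assoc, ← pow_add, add_comm m k]

theorem coeff_pow_mul_of_lt {m n : ℕ} (s : S) (hn : n < m) : hS.coeff (θ ^ m * s) n = 0 := by
  rw [coeff_pow_mul]
  exact Finsupp.mapDomain_of_notMem_range _ _ fun ⟨k, hk⟩ => by simp only at hk; omega

end Ring

section CommRing

variable {R S : Type*} [CommRing R] [Ring S] {α : R ≃+* R} {i : R →+* S} {θ : S}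
  (hS : IsSkewPolynomialRing α i θ) {ρ : R}
include hS

theorem pow_notMem_span_pow_succ (hρ : ¬ IsUnit ρ) (m : ℕ) :
    θ ^ m ∉ Submodule.span Sᵐᵒᵖ ({θ ^ (m + 1), i ρ} : Set S) := by
  rw [Submodule.mem_span_pair]
  rintro ⟨a, b, hab⟩
  rw [smul_eq_mul_unop, smul_eq_mul_unop] at hab
  have hρb : ρ * hS.coeff (unop b) m = 1 := by
    simpa [coeff_pow, coeff_of_mul, hS.coeff_pow_mul_of_lt _ m.lt_succ_self] using
      congrArg (hS.coeff · m) hab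
  exact hρ (IsUnit.of_mul_eq_one _ hρb)

theorem span_pow_succ_lt (hρ : ¬ IsUnit ρ) (m : ℕ) :
    Submodule.span Sᵐᵒᵖ ({θ ^ (m + 1), i ρ} : Set S) <
      Submodule.span Sᵐᵒᵖ ({θ ^ m, i ρ} : Set S) := by
  refine SetLike.lt_iff_le_and_exists.2 ⟨?_, θ ^ m, Submodule.subset_span (by simp),
    hS.pow_notMem_span_pow_succ hρ m⟩
  rw [Submodule.span_le, Set.insert_subset_iff, Set.singleton_subset_iff]
  refine ⟨?_, Submodule.subset_span (by simp)⟩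
  rw [pow_succ, ← op_smul_eq_mul]
  exact Submodule.smul_mem _ _ (Submodule.subset_span (by simp))

end CommRing

end IsSkewPolynomialRing

theorem quotient_by_nonunit_not_artinian_general
    {R S : Type*} [CommRing R] [Ring S]
    (α : R ≃+* R) (i : R →+* S) (θ : S) (hS : IsSkewPolynomialRing α i θ)
    (ρ : R) (hρu : ¬ IsUnit ρ) :
    -- S/ρS is not Artinian as a right S-module
    ¬ IsArtinian Sᵐᵒᵖ (S ⧸ Submodule.span Sᵐᵒᵖ {i ρ}) ∧
    -- the chain θ^m S + ρS is strictly descending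
    ∀ m : ℕ, 1 ≤ m →
      Submodule.span Sᵐᵒᵖ ({θ ^ (m + 1), i ρ} : Set S) <
        Submodule.span Sᵐᵒᵖ ({θ ^ m, i ρ} : Set S) := by
  have hlt := hS.span_pow_succ_lt hρu
  have hanti : StrictAnti fun m => Submodule.span Sᵐᵒᵖ ({θ ^ m, i ρ} : Set S) :=
    strictAnti_nat_of_succ_lt hlt
  have hle : ∀ m, Submodule.span Sᵐᵒᵖ {i ρ} ≤ Submodule.span Sᵐᵒᵖ ({θ ^ m, i ρ} : Set S) :=
    fun m => Submodule.span_mono (Set.subset_insert _ _)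
  exact ⟨Submodule.not_isArtinian_quotient_of_strictAnti hanti hle, fun m _ => hlt m⟩

theorem quotient_by_nonunit_not_artinian
    {R S : Type*} [CommRing R] [Ring S]
    (α : R ≃+* R) (i : R →+* S) (θ : S) (hS : IsSkewPolynomialRing α i θ)
    (ρ : R) (hρ0 : ρ ≠ 0) (hρu : ¬ IsUnit ρ) :
    -- S/ρS is not Artinian as a right S-module
    ¬ IsArtinian Sᵐᵒᵖ (S ⧸ Submodule.span Sᵐᵒᵖ {i ρ}) ∧
    -- the chain θ^m S + ρS is strictly descending
    ∀ m : ℕ, 1 ≤ m →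
      Submodule.span Sᵐᵒᵖ ({θ ^ (m + 1), i ρ} : Set S) <
        Submodule.span Sᵐᵒᵖ ({θ ^ m, i ρ} : Set S) :=
  quotient_by_nonunit_not_artinian_general α i θ hS ρ hρu
end

section
/- Let T be a ring and 𝒜 a multiplicatively closed right Ore subset of regular elements of T with 1 ∈ 𝒜, and let T𝒜^{-1} denote the right localization of T at 𝒜. If there exists a right T-module V such that the injective hull E_{T𝒜^{-1}}(V ⊗_T T𝒜^{-1}) is not locally Artinian as a T𝒜^{-1}-module, then the injective hull E_T(V/τ(V)) is not locally Artinian as a T-module, where τ(V) denotes the 𝒜-torsion submodule of V. -/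
/-!
STATEMENT 10: Let T be a ring and 𝒜 a multiplicatively closed right Ore subset of regular
elements of T with 1 ∈ 𝒜, and let T𝒜⁻¹ be the right localization of T at 𝒜. If there
exists a right T-module V such that E_{T𝒜⁻¹}(V ⊗_T T𝒜⁻¹) is not locally Artinian as a
T𝒜⁻¹-module, then E_T(V/τ(V)) is not locally Artinian, where τ(V) is the 𝒜-torsion
submodule of V.

Here the right localization T𝒜⁻¹ is axiomatized as a ring T' with a ring map φ : T → T'
which is injective, inverts 𝒜 and consists of right fractions; and V ⊗_T T𝒜⁻¹ is
axiomatized as a right T'-module W with a φ-semilinear map ψ : V → W through which W is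
a module of right fractions of V with kernel the 𝒜-torsion submodule.
-/

open MulOpposite

universe u

/-- The injective hull of the `A`-module `X` is locally Artinian: in every essential
extension of `X`, every finitely generated submodule is Artinian. -/
def HullIsLocallyArtinian (A : Type u) [Ring A] (X : Type u) [AddCommGroup X]
    [Module A X] : Prop :=
  ∀ (Y : Type u) [AddCommGroup Y] [Module A Y] (f : X →ₗ[A] Y), Function.Injective f →
    (∀ P : Submodule A Y, P ⊓ LinearMap.range f = ⊥ → P = ⊥) →
    ∀ M : Submodule A Y, M.FG → IsArtinian A M

/-!
Restrict scalars along `φ` and let `Y` be an essential extension of `W` over `T𝒜⁻¹`. Then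
`v + τ(V) ↦ ψ v` embeds `V/τ(V)` in `Y` essentially over `T`: a nonzero `y ∈ Y` has a nonzero
multiple `y·c ∈ W`; writing `c·a = t` with `a ∈ 𝒜`, the element `y·t ∈ W` has a multiple
`y·(t a') ∈ ψ(V)`, nonzero because elements of `𝒜` act invertibly on `Y`.

A finitely generated `T𝒜⁻¹`-submodule `M = span s` of `Y` is controlled by the `T`-submodule
`M₀ = span_T s`: by the Ore condition every `m ∈ M` has a multiple `m·a`, `a ∈ 𝒜`, in `M₀`,
and `a` acts invertibly, so `N ↦ N ∩ M₀` embeds the submodule lattice of `M` into that of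
`M₀`. Hence `M` is Artinian as soon as `M₀` is.

The general lemmas are stated for left modules: a right `T`-module is a left `Tᵐᵒᵖ`-module,
and the right Ore and fraction conditions become left ones.
-/

open Submodule

def Submodule.IsEssential {R Y : Type*} [Ring R] [AddCommGroup Y] [Module R Y]
    (N : Submodule R Y) : Prop :=
  ∀ P : Submodule R Y, P ⊓ N = ⊥ → P = ⊥

def Submonoid.IsLeftOre {R : Type*} [Monoid R] (A : Submonoid R) : Prop :=
  ∀ r : R, ∀ a ∈ A, ∃ r' : R, ∃ a' ∈ A, a' * r = r' * a

theorem Submonoid.isLeftOre_op {T : Type*} [Monoid T] {A : Submonoid T}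
    (hore : ∀ t : T, ∀ a ∈ A, ∃ t' : T, ∃ a' ∈ A, t * a' = a * t') : A.op.IsLeftOre :=
  fun r a ha =>
    let ⟨t', a', ha', h⟩ := hore r.unop a.unop ha
    ⟨op t', op a', ha', congrArg op h⟩

section

variable {R S : Type*} [Ring R] [Ring S] {φ : R →+* S}

theorem isArtinian_of_exists_isUnit_smul_eq {P Q : Type*} [AddCommGroup P] [Module R P]
    [AddCommGroup Q] [Module S Q] (j : P →ₛₗ[φ] Q) [IsArtinian R P]
    (h : ∀ q : Q, ∃ r : R, IsUnit (φ r) ∧ ∃ p, j p = φ r • q) : IsArtinian S Q := by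
  let F : Submodule S Q ↪o Submodule R P :=
    OrderEmbedding.ofMapLEIff (comap j) fun N₁ N₂ => by
      refine ⟨fun hle q hq => ?_, fun hle => comap_mono hle⟩
      obtain ⟨r, hr, p, hp⟩ := h q
      have : j p ∈ N₂ := hle (show j p ∈ N₁ from hp ▸ N₁.smul_mem _ hq)
      rwa [hp, smul_mem_iff_of_isUnit _ hr] at this
  exact F.wellFoundedLT

variable {Y : Type*} [AddCommGroup Y] [Module R Y] [Module S Y]
  (hφY : ∀ (r : R) (y : Y), r • y = φ r • y) {A : Submonoid R}
include hφY

theorem span_subset_span_of_smul_eq (s : Set Y) : (span R s : Set Y) ⊆ span S s :=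
  fun _ hx => span_induction (fun _ hy => subset_span hy) (zero_mem _)
    (fun _ _ _ _ => add_mem) (fun r y _ hy => hφY r y ▸ smul_mem _ _ hy) hx

theorem exists_smul_mem_span_of_mem_span (hore : A.IsLeftOre)
    (hfrac : ∀ c : S, ∃ r : R, ∃ a ∈ A, φ a * c = φ r) {s : Set Y} {y : Y}
    (hy : y ∈ span S s) : ∃ a ∈ A, φ a • y ∈ span R s := by
  induction hy using span_induction with
  | mem x hx => exact ⟨1, A.one_mem, by simpa using subset_span hx⟩
  | zero => exact ⟨1, A.one_mem, by simp⟩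
  | add x y _ _ hx hy =>
    obtain ⟨a, ha, hxa⟩ := hx
    obtain ⟨b, hb, hyb⟩ := hy
    obtain ⟨r', a', ha', hab⟩ := hore a b hb
    refine ⟨a' * a, A.mul_mem ha' ha, ?_⟩
    rw [smul_add]
    apply add_mem
    · rw [map_mul, mul_smul, ← hφY]
      exact smul_mem _ _ hxa
    · rw [hab, map_mul, mul_smul, ← hφY]
      exact smul_mem _ _ hyb
  | smul c x _ hx =>
    obtain ⟨a, ha, hxa⟩ := hx
    obtain ⟨r, d, hd, hdc⟩ := hfrac c
    obtain ⟨r', a', ha', har⟩ := hore r a ha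
    refine ⟨a' * d, A.mul_mem ha' hd, ?_⟩
    have hden : φ (a' * d) * c = φ r' * φ a := by
      rw [map_mul, mul_assoc, hdc, ← map_mul, har, map_mul]
    rw [smul_smul, hden, mul_smul, ← hφY]
    exact smul_mem _ _ hxa

theorem isArtinian_of_fg_of_forall_fg_isArtinian (hunit : ∀ a ∈ A, IsUnit (φ a))
    (hore : A.IsLeftOre) (hfrac : ∀ c : S, ∃ r : R, ∃ a ∈ A, φ a * c = φ r)
    (hY : ∀ M₀ : Submodule R Y, M₀.FG → IsArtinian R M₀) {M : Submodule S Y} (hM : M.FG) :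
    IsArtinian S M := by
  obtain ⟨s, rfl⟩ := hM
  have := hY (span R s) ⟨s, rfl⟩
  let j : span R (s : Set Y) →ₛₗ[φ] span S (s : Set Y) :=
    { toFun := fun x => ⟨x, span_subset_span_of_smul_eq hφY _ x.2⟩
      map_add' := fun _ _ => rfl
      map_smul' := fun r x => Subtype.ext (hφY r x) }
  refine isArtinian_of_exists_isUnit_smul_eq j fun y => ?_
  obtain ⟨a, ha, hya⟩ := exists_smul_mem_span_of_mem_span hφY hore hfrac y.2
  exact ⟨a, hunit a ha, ⟨_, hya⟩, rfl⟩

theorem Submodule.IsEssential.of_exists_smul_mem (hunit : ∀ a ∈ A, IsUnit (φ a))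
    (hfrac : ∀ c : S, ∃ r : R, ∃ a ∈ A, φ a * c = φ r) {N₁ : Submodule S Y}
    (hN₁ : N₁.IsEssential) {N : Submodule R Y} (hN : ∀ y ∈ N₁, ∃ a ∈ A, φ a • y ∈ N) :
    N.IsEssential := by
  intro P hP
  refine (Submodule.eq_bot_iff P).mpr fun y hy => by_contra fun hy0 => ?_
  have hspan : span S {y} ⊓ N₁ ≠ ⊥ := fun h => hy0 (by simpa using hN₁ _ h)
  obtain ⟨z, hz, hz0⟩ := (Submodule.ne_bot_iff _).mp hspan
  obtain ⟨⟨c, rfl⟩, hcy⟩ := And.imp mem_span_singleton.mp id (mem_inf.mp hz)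
  obtain ⟨r, a', ha', hc⟩ := hfrac c
  obtain ⟨a, ha, hN⟩ := hN _ (N₁.smul_mem (φ a') hcy)
  have key : φ a • φ a' • c • y = (a * r) • y := by
    rw [smul_smul (φ a') c, hc, smul_smul, ← map_mul, hφY]
  have hmem : (a * r) • y ∈ P ⊓ N := mem_inf.mpr ⟨P.smul_mem _ hy, key ▸ hN⟩
  rw [hP, mem_bot, ← key, (hunit a ha).smul_eq_zero, (hunit a' ha').smul_eq_zero] at hmem
  exact hz0 hmem

end

theorem hull_not_locallyArtinian_of_localized_hull_not_locallyArtinian_general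
    {T T' : Type u} [Ring T] [Ring T'] (A : Submonoid T)
    -- 𝒜 is a right Ore set in T
    (hore : ∀ t : T, ∀ a ∈ A, ∃ t' : T, ∃ a' ∈ A, t * a' = a * t')
    -- T' = T𝒜⁻¹ is the right localization of T at 𝒜, via φ
    (φ : T →+* T')
    (hφunit : ∀ a ∈ A, IsUnit (φ a))
    (hφfrac : ∀ x : T', ∃ t : T, ∃ a ∈ A, x * φ a = φ t)
    -- V a right T-module, W = V ⊗_T T𝒜⁻¹ a right T'-module, via the φ-semilinear map ψ
    (V : Type u) [AddCommGroup V] [Module Tᵐᵒᵖ V]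
    (W : Type u) [AddCommGroup W] [Module T'ᵐᵒᵖ W]
    (ψ : V →+ W)
    (hψsemilinear : ∀ (v : V) (t : T), ψ (op t • v) = op (φ t) • ψ v)
    (hψfrac : ∀ w : W, ∃ v : V, ∃ a ∈ A, op (φ a) • w = ψ v)
    (hψker : ∀ v : V, ψ v = 0 ↔ ∃ a ∈ A, op a • v = 0)
    -- τ is the 𝒜-torsion submodule of V
    (τ : Submodule Tᵐᵒᵖ V) (hτ : ∀ v : V, v ∈ τ ↔ ∃ a ∈ A, op a • v = 0)
    -- hypothesis: E_{T𝒜⁻¹}(V ⊗_T T𝒜⁻¹) is not locally Artinian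
    (hW : ¬ HullIsLocallyArtinian T'ᵐᵒᵖ W) :
    ¬ HullIsLocallyArtinian Tᵐᵒᵖ (V ⧸ τ) := by
  contrapose! hW
  intro Y _ _ f hf hfess M hM
  let _ : Module Tᵐᵒᵖ Y := Module.compHom Y φ.op
  have hφY : ∀ (t : Tᵐᵒᵖ) (y : Y), t • y = φ.op t • y := fun _ _ => rfl
  have hunit : ∀ a ∈ A.op, IsUnit (φ.op a) := fun a ha => (hφunit a.unop ha).op
  have hfrac : ∀ c : T'ᵐᵒᵖ, ∃ r, ∃ a ∈ A.op, φ.op a * c = φ.op r := fun c =>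
    let ⟨t, a, ha, h⟩ := hφfrac c.unop
    ⟨op t, op a, ha, congrArg op h⟩
  let ψY : V →ₗ[Tᵐᵒᵖ] Y :=
    { toFun := fun v => f (ψ v)
      map_add' := by simp
      map_smul' := fun c v => by
        rw [← op_unop c, hψsemilinear, map_smul]
        rfl }
  have hker : LinearMap.ker ψY = τ := by
    ext v
    rw [LinearMap.mem_ker, hτ, ← hψker]
    exact map_eq_zero_iff f hf
  let g := τ.liftQ ψY hker.ge
  refine isArtinian_of_fg_of_forall_fg_isArtinian hφY hunit
    (Submonoid.isLeftOre_op hore) hfrac (hW Y g ?_ ?_) hM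
  · exact LinearMap.ker_eq_bot.mp (τ.ker_liftQ_eq_bot _ _ hker.le)
  · refine IsEssential.of_exists_smul_mem hφY hunit hfrac hfess ?_
    rintro _ ⟨w, rfl⟩
    obtain ⟨v, a, ha, hv⟩ := hψfrac w
    exact ⟨op a, ha, Submodule.Quotient.mk v, by simp [g, ψY, ← hv]⟩

theorem hull_not_locallyArtinian_of_localized_hull_not_locallyArtinian
    {T T' : Type u} [Ring T] [Ring T'] (A : Submonoid T)
    -- 𝒜 consists of regular elements
    (hreg : ∀ a ∈ A, IsRegular a)
    -- 𝒜 is a right Ore set in T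
    (hore : ∀ t : T, ∀ a ∈ A, ∃ t' : T, ∃ a' ∈ A, t * a' = a * t')
    -- T' = T𝒜⁻¹ is the right localization of T at 𝒜, via φ
    (φ : T →+* T') (hφinj : Function.Injective φ)
    (hφunit : ∀ a ∈ A, IsUnit (φ a))
    (hφfrac : ∀ x : T', ∃ t : T, ∃ a ∈ A, x * φ a = φ t)
    -- V a right T-module, W = V ⊗_T T𝒜⁻¹ a right T'-module, via the φ-semilinear map ψ
    (V : Type u) [AddCommGroup V] [Module Tᵐᵒᵖ V]
    (W : Type u) [AddCommGroup W] [Module T'ᵐᵒᵖ W]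
    (ψ : V →+ W)
    (hψsemilinear : ∀ (v : V) (t : T), ψ (op t • v) = op (φ t) • ψ v)
    (hψfrac : ∀ w : W, ∃ v : V, ∃ a ∈ A, op (φ a) • w = ψ v)
    (hψker : ∀ v : V, ψ v = 0 ↔ ∃ a ∈ A, op a • v = 0)
    -- τ is the 𝒜-torsion submodule of V
    (τ : Submodule Tᵐᵒᵖ V) (hτ : ∀ v : V, v ∈ τ ↔ ∃ a ∈ A, op a • v = 0)
    -- hypothesis: E_{T𝒜⁻¹}(V ⊗_T T𝒜⁻¹) is not locally Artinian
    (hW : ¬ HullIsLocallyArtinian T'ᵐᵒᵖ W) :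
    ¬ HullIsLocallyArtinian Tᵐᵒᵖ (V ⧸ τ) :=
  hull_not_locallyArtinian_of_localized_hull_not_locallyArtinian_general A hore φ hφunit hφfrac V W
    ψ hψsemilinear hψfrac hψker τ hτ hW
end

section
/- Let R be a commutative Noetherian domain which is an algebra over an uncountable field but is not itself a field. Suppose there exists a countable multiplicatively closed subset 𝒜 of R∖{0} such that the localization R𝒜^{-1} equals the field of fractions of R. Then R has Krull dimension 1 and the prime spectrum Spec(R) is countable. -/
/-!
Every nonzero prime of `R` contains an element of `𝒜`, hence contains a minimal prime over
`(a)` for some `a ∈ 𝒜`; by Krull's principal ideal theorem these are exactly the height-one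
primes, so there are only countably many of them. A prime `P` of height at least two is contained
in none of them, nor in `0`, so countable prime avoidance (valid in a Noetherian algebra over an
uncountable field) gives a nonzero `x ∈ P` outside all height-one primes. But a minimal prime over `(x)` inside `P` has height one, a contradiction.
-/

open Ideal

namespace Submodule

variable {k V : Type*} [Field k] [AddCommGroup V] [Module k V]

theorem mem_of_add_smul_mem_of_add_smul_mem {W : Submodule k V} {x a : V} {c d : k} (hcd : c ≠ d)
    (hc : x + c • a ∈ W) (hd : x + d • a ∈ W) : a ∈ W ∧ x ∈ W := by
  have ha : a ∈ W := by
    have hdiff : (c - d) • a ∈ W := by simpa [sub_smul] using W.sub_mem hc hd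
    simpa [smul_smul, sub_ne_zero.mpr hcd] using W.smul_mem (c - d)⁻¹ hdiff
  exact ⟨ha, by simpa using W.sub_mem hc (W.smul_mem c ha)⟩

theorem exists_subset_of_subset_iUnion [Uncountable k] {ι : Type*} [Countable ι]
    {N : Submodule k V} {p : ι → Submodule k V} (hN : (N : Set V) ⊆ ⋃ i, (p i : Set V))
    {s : Set V} (hs : s.Finite) (hsN : s ⊆ N) : ∃ i, s ⊆ p i := by
  suffices ∀ x ∈ N, ∃ i, x ∈ p i ∧ s ⊆ p i by
    obtain ⟨i, -, hi⟩ := this 0 N.zero_mem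
    exact ⟨i, hi⟩
  induction s, hs using Set.Finite.induction_on with
  | empty => simpa using fun x hx ↦ Set.mem_iUnion.mp (hN hx)
  | @insert a s _ _ ih =>
    intro x hx
    -- pigeonhole: uncountably many vectors `x + c • a`, countably many subspaces
    have haN : a ∈ N := hsN (Set.mem_insert a s)
    choose i hxi hsi using fun c : k ↦
      ih ((Set.subset_insert a s).trans hsN) (x + c • a) (N.add_mem hx (N.smul_mem c haN))
    obtain ⟨c, d, hi, hcd⟩ :=
      Function.not_injective_iff.mp (not_injective_uncountable_countable i)
    obtain ⟨ha, hx⟩ := mem_of_add_smul_mem_of_add_smul_mem hcd (hxi c) (hi ▸ hxi d)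
    exact ⟨i c, hx, Set.insert_subset ha (hsi c)⟩

end Submodule

theorem Ideal.exists_mem_forall_notMem_of_countable (k : Type*) {R ι : Type*} [Field k]
    [Uncountable k] [CommRing R] [Algebra k R] [Countable ι] {I : Ideal R} (hI : I.FG)
    {p : ι → Ideal R} (hp : ∀ i, ¬ I ≤ p i) : ∃ x ∈ I, ∀ i, x ∉ p i := by
  by_contra! hcover
  obtain ⟨s, rfl⟩ := hI
  obtain ⟨i, hi⟩ := Submodule.exists_subset_of_subset_iUnion (k := k)
    (N := (span (s : Set R)).restrictScalars k) (p := fun i ↦ (p i).restrictScalars k)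
    (fun x hx ↦ Set.mem_iUnion.mpr (hcover x hx)) s.finite_toSet subset_span
  exact hp i (span_le.mpr hi)

theorem IsLocalization.exists_mem_dvd_of_isFractionRing {R S : Type*} [CommRing R] [CommRing S]
    [Algebra R S] (M : Submonoid R) [IsLocalization M S] [IsFractionRing R S] {y : R}
    (hy : y ∈ nonZeroDivisors R) : ∃ a ∈ M, y ∣ a :=
  (IsLocalization.algebraMap_isUnit_iff M).mp (IsLocalization.map_units S ⟨y, hy⟩)

section NoetherianDomain

variable {R : Type*} [CommRing R] [IsDomain R] [IsNoetherianRing R]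

theorem Ideal.height_eq_one_of_mem_minimalPrimes_span_singleton {x : R} (hx : x ≠ 0)
    {p : Ideal R} (hp : p ∈ (span {x}).minimalPrimes) : p.height = 1 := by
  refine le_antisymm (height_le_one_of_isPrincipal_of_mem_minimalPrimes _ p hp) ?_
  rw [Order.one_le_iff_ne_zero, Ne, height_eq_zero_iff_eq_bot]
  rintro rfl
  exact hx (by simpa using hp.1.2 (mem_span_singleton_self x))

theorem countable_setOf_height_eq_one_of_forall_dvd {A : Set R} (hA : A.Countable)
    (hA0 : (0 : R) ∉ A) (hdvd : ∀ y : R, y ≠ 0 → ∃ a ∈ A, y ∣ a) :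
    {p : Ideal R | p.IsPrime ∧ p.height = 1}.Countable := by
  refine (hA.biUnion fun a _ ↦
    (finite_minimalPrimes_of_isNoetherianRing R (span {a})).countable).mono ?_
  rintro t ⟨ht, ht1⟩
  obtain ⟨y, hyt, hy0⟩ := Submodule.exists_mem_ne_zero_of_ne_bot (ne_bot_of_height_eq_one ht1)
  obtain ⟨a, haA, hya⟩ := hdvd y hy0
  obtain ⟨r, hr, hrt⟩ := exists_minimalPrimes_le
    (span_singleton_le_iff_mem t |>.mpr (t.mem_of_dvd hya hyt))
  have hr1 := height_eq_one_of_mem_minimalPrimes_span_singleton (ne_of_mem_of_not_mem haA hA0) hr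
  have : r.IsPrime := hr.1.1
  obtain rfl : r = t := eq_of_le_of_height_le r hrt (by rw [ht1, hr1])
  exact Set.mem_biUnion haA hr

theorem height_le_one_of_countable_setOf_height_eq_one (k : Type*) [Field k] [Uncountable k]
    [Algebra k R] (hcount : {p : Ideal R | p.IsPrime ∧ p.height = 1}.Countable)
    {P : Ideal R} (hP : P.IsPrime) : P.height ≤ 1 := by
  by_contra! hP1
  set S := insert ⊥ {p : Ideal R | p.IsPrime ∧ p.height = 1}
  have : Countable S := (hcount.insert ⊥).to_subtype
  have hPS : ∀ q : S, ¬ P ≤ q := by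
    rintro ⟨q, rfl | ⟨hq, hq1⟩⟩ hPq
    · simp [le_bot_iff.mp hPq] at hP1
    · exact hP1.not_ge (hq1 ▸ height_mono hPq)
  obtain ⟨x, hxP, hxS⟩ := exists_mem_forall_notMem_of_countable k
    (IsNoetherian.noetherian P) hPS
  have hx0 : x ≠ 0 := fun hx ↦ hxS ⟨⊥, Set.mem_insert _ _⟩ (by simp [hx])
  obtain ⟨r, hr, -⟩ := exists_minimalPrimes_le (span_singleton_le_iff_mem P |>.mpr hxP)
  exact hxS ⟨r, Or.inr ⟨hr.1.1, height_eq_one_of_mem_minimalPrimes_span_singleton hx0 hr⟩⟩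
    (hr.1.2 (mem_span_singleton_self x))

end NoetherianDomain

theorem ringKrullDim_eq_one_of_forall_height_le_one {R : Type*} [CommRing R] [IsDomain R]
    (hR : ¬ IsField R) (h : ∀ p : Ideal R, p.IsPrime → p.height ≤ 1) :
    ringKrullDim R = 1 := by
  refine le_antisymm ((ringKrullDim_le_iff_height_le _).mpr fun p hp ↦ mod_cast h p hp) ?_
  obtain ⟨p, hp0, hp⟩ := Ring.not_isField_iff_exists_prime.mp hR
  have hp1 : 1 ≤ p.height := by
    rwa [Order.one_le_iff_ne_zero, Ne, height_eq_zero_iff_eq_bot]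
  exact (mod_cast hp1 : (1 : WithBot ℕ∞) ≤ p.height).trans height_le_ringKrullDim_of_isPrime

theorem countable_primeSpectrum_of_forall_height_le_one {R : Type*} [CommRing R] [IsDomain R]
    (hcount : {p : Ideal R | p.IsPrime ∧ p.height = 1}.Countable)
    (h : ∀ p : Ideal R, p.IsPrime → p.height ≤ 1) : Countable (PrimeSpectrum R) := by
  refine Set.countable_univ_iff.mp <|
    ((hcount.insert ⊥).preimage fun _ _ ↦ PrimeSpectrum.ext).mono fun P _ ↦ ?_
  rcases (h _ P.2).lt_or_eq with h0 | h1
  · exact Or.inl (height_eq_zero_iff_eq_bot.mp (Order.lt_one_iff.mp h0))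
  · exact Or.inr ⟨P.2, h1⟩

theorem krullDim_one_of_countable_localization_fractionField
    {R : Type*} [CommRing R] [IsDomain R] [IsNoetherianRing R]
    (k : Type*) [Field k] [Algebra k R] (hk : ¬ Countable k)
    (hnf : ¬ IsField R)
    (A : Submonoid R) (hA0 : (0 : R) ∉ A) (hAcount : (A : Set R).Countable)
    -- the localization of R at 𝒜 is the whole field of fractions of R
    (hAfrac : IsFractionRing R (Localization A)) :
    ringKrullDim R = 1 ∧ Countable (PrimeSpectrum R) := by
  have : Uncountable k := ⟨hk⟩
  have hcount := countable_setOf_height_eq_one_of_forall_dvd hAcount hA0 fun y hy ↦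
    IsLocalization.exists_mem_dvd_of_isFractionRing A (S := Localization A)
      (mem_nonZeroDivisors_of_ne_zero hy)
  have hheight (P : Ideal R) (hP : P.IsPrime) : P.height ≤ 1 :=
    height_le_one_of_countable_setOf_height_eq_one k hcount hP
  exact ⟨ringKrullDim_eq_one_of_forall_height_le_one hnf hheight,
    countable_primeSpectrum_of_forall_height_le_one hcount hheight⟩
end
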